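/- Let V be a finite set, F a finite index set, and for each t ∈ F let h_t : Finset V → ℝ be submodular, non-decreasing, and satisfy 0 ≤ h_t(A) ≤ 1 for all A ⊆ V. Then the set function A ↦ 1 − ∏_{t ∈ F} (1 − h_t(A)) is submodular, non-decreasing, and takes values in [0,1]. -/

import Mathlib

/-- A set function `f : Finset V → ℝ` is submodular: for all `A ⊆ B` and `v ∉ B`,
`f(A ∪ {v}) − f(A) ≥ f(B ∪ {v}) − f(B)`. -/
def Submodular {V : Type*} [DecidableEq V] (f : Finset V → ℝ) : Prop :=
  ∀ A B : Finset V, A ⊆ B → ∀ v ∉ B, f (insert v B) - f B ≤ f (insert v A) - f A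

/-- A set function is non-decreasing. -/
def NonDecreasing {V : Type*} (f : Finset V → ℝ) : Prop :=
  ∀ A B : Finset V, A ⊆ B → f A ≤ f B

/-!
With `g_t := 1 - h_t`, each `g_t` is non-negative, non-increasing and supermodular, and
these three properties are closed under pointwise products: for `A ⊆ B` and `v ∉ B`,
`Δ_v(fg)(B) = f(B+v) Δ_v g(B) + g(B) Δ_v f(B)`, and each term dominates its counterpart at `A`
because the increments are non-positive and grow with the set while the coefficients are
non-negative and shrink. Hence `∏ g_t` is supermodular and non-increasing with values in
`[0, 1]`, and `1 - ∏ g_t` is submodular and non-decreasing.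
-/

open Finset

lemma antitone_prod_of_nonneg {ι α : Type*} [Preorder α] (s : Finset ι) {f : ι → α → ℝ}
    (hf0 : ∀ i ∈ s, 0 ≤ f i) (hf_anti : ∀ i ∈ s, Antitone (f i)) :
    Antitone (fun a => ∏ i ∈ s, f i a) := fun _ _ hab =>
  prod_le_prod (fun i hi => hf0 i hi _) (fun i hi => hf_anti i hi hab)

section SetFunction

variable {V : Type*} [DecidableEq V]

def Supermodular (f : Finset V → ℝ) : Prop :=
  ∀ A B : Finset V, A ⊆ B → ∀ v ∉ B, f (insert v A) - f A ≤ f (insert v B) - f B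

lemma Submodular.supermodular_const_sub {f : Finset V → ℝ} (hf : Submodular f) (c : ℝ) :
    Supermodular (fun A => c - f A) := fun A B hAB v hv => by
  linarith [hf A B hAB v hv]

lemma Supermodular.submodular_const_sub {f : Finset V → ℝ} (hf : Supermodular f) (c : ℝ) :
    Submodular (fun A => c - f A) := fun A B hAB v hv => by
  linarith [hf A B hAB v hv]

lemma supermodular_const (c : ℝ) : Supermodular (fun _ : Finset V => c) := fun _ _ _ _ _ => by
  simp

lemma Supermodular.mul {f g : Finset V → ℝ} (hf : Supermodular f) (hg : Supermodular g)
    (hf0 : 0 ≤ f) (hg0 : 0 ≤ g) (hf_anti : Antitone f) (hg_anti : Antitone g) :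
    Supermodular (fun A => f A * g A) := by
  intro A B hAB v hv
  have hAvBv : insert v A ⊆ insert v B := insert_subset_insert v hAB
  have hΔfA : f (insert v A) - f A ≤ 0 := sub_nonpos.2 (hf_anti (subset_insert v A))
  have hΔgA : g (insert v A) - g A ≤ 0 := sub_nonpos.2 (hg_anti (subset_insert v A))
  calc f (insert v A) * g (insert v A) - f A * g A
      = f (insert v A) * (g (insert v A) - g A) + g A * (f (insert v A) - f A) := by ring
    _ ≤ f (insert v B) * (g (insert v A) - g A) + g B * (f (insert v A) - f A) :=
        add_le_add (mul_le_mul_of_nonpos_right (hf_anti hAvBv) hΔgA)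
          (mul_le_mul_of_nonpos_right (hg_anti hAB) hΔfA)
    _ ≤ f (insert v B) * (g (insert v B) - g B) + g B * (f (insert v B) - f B) :=
        add_le_add (mul_le_mul_of_nonneg_left (hg A B hAB v hv) (hf0 _))
          (mul_le_mul_of_nonneg_left (hf A B hAB v hv) (hg0 _))
    _ = f (insert v B) * g (insert v B) - f B * g B := by ring

lemma Supermodular.prod {ι : Type*} (s : Finset ι) {f : ι → Finset V → ℝ}
    (hf : ∀ i ∈ s, Supermodular (f i)) (hf0 : ∀ i ∈ s, 0 ≤ f i)
    (hf_anti : ∀ i ∈ s, Antitone (f i)) :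
    Supermodular (fun A => ∏ i ∈ s, f i A) := by
  classical
  induction s using Finset.induction with
  | empty => simpa using supermodular_const 1
  | insert i s hi ih =>
    rw [forall_mem_insert] at hf hf0 hf_anti
    simp only [prod_insert hi]
    exact hf.1.mul (ih hf.2 hf0.2 hf_anti.2) hf0.1
      (fun A => prod_nonneg fun j hj => hf0.2 j hj A) hf_anti.1
      (antitone_prod_of_nonneg s hf0.2 hf_anti.2)

end SetFunction

theorem one_sub_prod_one_sub_submodular_general
    {V : Type*} [DecidableEq V]
    {F : Type*} [Fintype F] (h : F → Finset V → ℝ)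
    (hsub : ∀ t : F, Submodular (h t))
    (hmono : ∀ t : F, NonDecreasing (h t))
    (hrange : ∀ (t : F) (A : Finset V), 0 ≤ h t A ∧ h t A ≤ 1) :
    Submodular (fun A => 1 - ∏ t : F, (1 - h t A)) ∧
      NonDecreasing (fun A => 1 - ∏ t : F, (1 - h t A)) ∧
      (∀ A : Finset V,
        0 ≤ 1 - ∏ t : F, (1 - h t A) ∧ 1 - ∏ t : F, (1 - h t A) ≤ 1) := by
  have hg0 : ∀ t ∈ univ, 0 ≤ fun A => 1 - h t A := fun t _ A => sub_nonneg.2 (hrange t A).2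
  have hg_anti : ∀ t ∈ univ, Antitone fun A => 1 - h t A :=
    fun t _ _ _ hAB => sub_le_sub_left (hmono t _ _ hAB) 1
  have hg_sup : ∀ t ∈ univ, Supermodular fun A => 1 - h t A :=
    fun t _ => (hsub t).supermodular_const_sub 1
  refine ⟨(Supermodular.prod univ hg_sup hg0 hg_anti).submodular_const_sub 1,
    fun A B hAB => sub_le_sub_left (antitone_prod_of_nonneg univ hg0 hg_anti hAB) 1,
    fun A => ⟨?_, sub_le_self 1 (prod_nonneg fun t ht => hg0 t ht A)⟩⟩
  exact sub_nonneg.2 (prod_le_one (fun t ht => hg0 t ht A) fun t _ => sub_le_self 1 (hrange t A).1)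

theorem one_sub_prod_one_sub_submodular
    {V : Type*} [Fintype V] [DecidableEq V]
    {F : Type*} [Fintype F] (h : F → Finset V → ℝ)
    (hsub : ∀ t : F, Submodular (h t))
    (hmono : ∀ t : F, NonDecreasing (h t))
    (hrange : ∀ (t : F) (A : Finset V), 0 ≤ h t A ∧ h t A ≤ 1) :
    Submodular (fun A => 1 - ∏ t : F, (1 - h t A)) ∧
      NonDecreasing (fun A => 1 - ∏ t : F, (1 - h t A)) ∧
      (∀ A : Finset V,
        0 ≤ 1 - ∏ t : F, (1 - h t A) ∧ 1 - ∏ t : F, (1 - h t A) ≤ 1) :=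
  one_sub_prod_one_sub_submodular_general h hsub hmono hrange
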